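/- For the multilinear extension F of a nonnegative submodular set function f, for every x ∈ [0,1]^E one has F(x) ≥ F(0) + Σ_{e∈E} ∇_e F(x) · x_e; in particular F(x) ≥ Σ_{e∈E} ∇_e F(x) · x_e. -/
import Mathlib


open Finset

/-- The multilinear extension `F` of a set function `f : 2^E → ℝ`:
`F(x) = Σ_{S ⊆ E} (Π_{e∈S} x_e)(Π_{e∉S} (1 − x_e)) · f(S)`. -/
noncomputable def mle {E : Type*} [Fintype E] [DecidableEq E]
    (f : Finset E → ℝ) (x : E → ℝ) : ℝ :=
  ∑ S : Finset E, (∏ e ∈ S, x e) * (∏ e ∈ Sᶜ, (1 - x e)) * f S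

/-- The discrete derivative `∇_e F(x) = F(x_{-e},1) − F(x_{-e},0)`. -/
noncomputable def mleGrad {E : Type*} [Fintype E] [DecidableEq E]
    (f : Finset E → ℝ) (x : E → ℝ) (e : E) : ℝ :=
  mle f (Function.update x e 1) - mle f (Function.update x e 0)

/-- The characteristic vector `1_S` of a subset `S ⊆ E`. -/
def indic {E : Type*} [DecidableEq E] (S : Finset E) : E → ℝ :=
  fun e => if e ∈ S then 1 else 0

/-- A set function `f : 2^E → ℝ` is submodular if
`f(S ∪ {e}) − f(S) ≥ f(T ∪ {e}) − f(T)` for all `S ⊆ T ⊆ E` and `e ∉ T`. -/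
def SubmodularFn {E : Type*} [DecidableEq E] (f : Finset E → ℝ) : Prop :=
  ∀ S T : Finset E, S ⊆ T → ∀ e, e ∉ T →
    f (insert e S) - f S ≥ f (insert e T) - f T

section Aux

variable {E : Type*} [Fintype E] [DecidableEq E]

lemma prod_upd_mem (x : E → ℝ) (e : E) (t : ℝ) {S : Finset E} (he : e ∈ S) :
    ∏ e' ∈ S, Function.update x e t e' = t * ∏ e' ∈ S.erase e, x e' := by
  rw [← Finset.mul_prod_erase S _ he, Function.update_self]
  congr 1
  exact Finset.prod_congr rfl fun e' h => Function.update_of_ne (Finset.ne_of_mem_erase h) _ _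

lemma prod_upd_not_mem (x : E → ℝ) (e : E) (t : ℝ) {S : Finset E} (he : e ∉ S) :
    ∏ e' ∈ S, Function.update x e t e' = ∏ e' ∈ S, x e' :=
  Finset.prod_congr rfl fun e' h => Function.update_of_ne (ne_of_mem_of_not_mem h he) _ _

lemma prod_one_sub_upd_mem (x : E → ℝ) (e : E) (t : ℝ) {S : Finset E} (he : e ∈ S) :
    ∏ e' ∈ S, (1 - Function.update x e t e')
      = (1 - t) * ∏ e' ∈ S.erase e, (1 - x e') := by
  rw [← Finset.mul_prod_erase S (fun e' => 1 - Function.update x e t e') he,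
      Function.update_self]
  congr 1
  exact Finset.prod_congr rfl fun e' h => by
    rw [Function.update_of_ne (Finset.ne_of_mem_erase h)]

lemma prod_one_sub_upd_not_mem (x : E → ℝ) (e : E) (t : ℝ) {S : Finset E} (he : e ∉ S) :
    ∏ e' ∈ S, (1 - Function.update x e t e') = ∏ e' ∈ S, (1 - x e') :=
  Finset.prod_congr rfl fun e' h => by
    rw [Function.update_of_ne (ne_of_mem_of_not_mem h he)]

/-- `mle` is affine in each coordinate. -/
lemma mle_update (f : Finset E → ℝ) (x : E → ℝ) (e : E) (t : ℝ) :
    mle f (Function.update x e t)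
      = (1 - t) * mle f (Function.update x e 0) + t * mle f (Function.update x e 1) := by
  unfold mle
  rw [Finset.mul_sum, Finset.mul_sum, ← Finset.sum_add_distrib]
  refine Finset.sum_congr rfl fun S _ => ?_
  by_cases he : e ∈ S
  · have hc : e ∉ Sᶜ := by simp [he]
    rw [prod_upd_mem x e t he, prod_upd_mem x e 0 he, prod_upd_mem x e 1 he,
        prod_one_sub_upd_not_mem x e t hc, prod_one_sub_upd_not_mem x e 0 hc,
        prod_one_sub_upd_not_mem x e 1 hc]
    ring
  · have hc : e ∈ Sᶜ := Finset.mem_compl.2 he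
    rw [prod_upd_not_mem x e t he, prod_upd_not_mem x e 0 he, prod_upd_not_mem x e 1 he,
        prod_one_sub_upd_mem x e t hc, prod_one_sub_upd_mem x e 0 hc,
        prod_one_sub_upd_mem x e 1 hc]
    ring

lemma mle_update_one (f : Finset E → ℝ) (x : E → ℝ) (e : E) :
    mle f (Function.update x e 1) = mle (fun S => f (insert e S)) (Function.update x e 0) := by
  classical
  unfold mle
  have hinv : Function.Involutive
      (fun S : Finset E => if e ∈ S then S.erase e else insert e S) := by
    intro S
    dsimp only
    by_cases he : e ∈ S
    · rw [if_pos he, if_neg (Finset.notMem_erase e S), Finset.insert_erase he]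
    · rw [if_neg he, if_pos (Finset.mem_insert_self e S), Finset.erase_insert he]
  refine (Fintype.sum_bijective _ hinv.bijective _ _ fun S => ?_).symm
  by_cases he : e ∈ S
  · rw [if_pos he]
    have h1 : ∏ e' ∈ S, Function.update x e 0 e' = 0 :=
      Finset.prod_eq_zero he (by simp)
    have h2 : ∏ e' ∈ (S.erase e)ᶜ, (1 - Function.update x e 1 e') = 0 :=
      Finset.prod_eq_zero (Finset.mem_compl.2 (Finset.notMem_erase e S)) (by simp)
    rw [h1, h2]
    ring
  · rw [if_neg he]
    have h1 : ∏ e' ∈ insert e S, Function.update x e 1 e'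
        = 1 * ∏ e' ∈ (insert e S).erase e, x e' :=
      prod_upd_mem x e 1 (Finset.mem_insert_self e S)
    rw [h1, Finset.erase_insert he, Finset.compl_insert,
        prod_one_sub_upd_not_mem x e 1 (Finset.notMem_erase e Sᶜ),
        prod_upd_not_mem x e 0 he,
        prod_one_sub_upd_mem x e 0 (Finset.mem_compl.2 he)]
    ring

lemma mle_update_zero' (f : Finset E → ℝ) (x : E → ℝ) (e : E) :
    mle f (Function.update x e 0) = mle (fun S => f (S.erase e)) (Function.update x e 0) := by
  unfold mle
  refine Finset.sum_congr rfl fun S _ => ?_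
  by_cases he : e ∈ S
  · have h1 : ∏ e' ∈ S, Function.update x e 0 e' = 0 :=
      Finset.prod_eq_zero he (by simp)
    rw [h1]; ring
  · simp [Finset.erase_eq_of_notMem he]

lemma mleGrad_eq (f : Finset E → ℝ) (x : E → ℝ) (e : E) :
    mleGrad f x e
      = mle (fun S => f (insert e S) - f (S.erase e)) (Function.update x e 0) := by
  rw [mleGrad, mle_update_one, mle_update_zero' f x e]
  unfold mle
  rw [← Finset.sum_sub_distrib]
  exact Finset.sum_congr rfl fun S _ => by ring

lemma mleGrad_update_self (f : Finset E → ℝ) (x : E → ℝ) (e : E) (t : ℝ) :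
    mleGrad f (Function.update x e t) e = mleGrad f x e := by
  unfold mleGrad
  rw [Function.update_idem, Function.update_idem]

lemma mleGrad_update_affine (f : Finset E → ℝ) (x : E → ℝ) {a e : E} (h : a ≠ e) (t : ℝ) :
    mleGrad f (Function.update x a t) e
      = (1 - t) * mleGrad f (Function.update x a 0) e
        + t * mleGrad f (Function.update x a 1) e := by
  rw [mleGrad_eq f (Function.update x a t) e, Function.update_comm h,
      mle_update, ← Function.update_comm h (0:ℝ) (0:ℝ) x, ← Function.update_comm h (1:ℝ) (0:ℝ) x,
      ← mleGrad_eq, ← mleGrad_eq]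

lemma mle_nonneg {f : Finset E → ℝ} {x : E → ℝ} (hnn : ∀ S, 0 ≤ f S)
    (hx0 : ∀ e, 0 ≤ x e) (hx1 : ∀ e, x e ≤ 1) : 0 ≤ mle f x := by
  refine Finset.sum_nonneg fun S _ => ?_
  refine mul_nonneg (mul_nonneg ?_ ?_) (hnn S)
  · exact Finset.prod_nonneg fun e _ => hx0 e
  · exact Finset.prod_nonneg fun e _ => by linarith [hx1 e]

lemma mle_nonpos {f : Finset E → ℝ} {x : E → ℝ} (hf : ∀ S, f S ≤ 0)
    (hx0 : ∀ e, 0 ≤ x e) (hx1 : ∀ e, x e ≤ 1) : mle f x ≤ 0 := by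
  refine Finset.sum_nonpos fun S _ => ?_
  refine mul_nonpos_of_nonneg_of_nonpos (mul_nonneg ?_ ?_) (hf S)
  · exact Finset.prod_nonneg fun e _ => hx0 e
  · exact Finset.prod_nonneg fun e _ => by linarith [hx1 e]

lemma upd_nonneg {y : E → ℝ} (hy : ∀ e', 0 ≤ y e') (a : E) :
    ∀ e', 0 ≤ Function.update y a 0 e' := by
  intro e'
  rcases eq_or_ne e' a with rfl | h
  · simp
  · rw [Function.update_of_ne h]; exact hy e'

lemma upd_le_one {y : E → ℝ} (hy : ∀ e', y e' ≤ 1) (a : E) :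
    ∀ e', Function.update y a 0 e' ≤ 1 := by
  intro e'
  rcases eq_or_ne e' a with rfl | h
  · simp
  · rw [Function.update_of_ne h]; exact hy e'

lemma insert_erase_self' (a : E) (S : Finset E) : insert a (S.erase a) = insert a S := by
  ext b
  simp only [Finset.mem_insert, Finset.mem_erase]
  constructor
  · rintro (rfl | ⟨_, hb⟩)
    · exact Or.inl rfl
    · exact Or.inr hb
  · rintro (rfl | hb)
    · exact Or.inl rfl
    · rcases eq_or_ne b a with rfl | h
      · exact Or.inl rfl
      · exact Or.inr ⟨h, hb⟩

lemma double_diff_nonpos {f : Finset E → ℝ} (hsub : SubmodularFn f) {a e : E}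
    (hae : a ≠ e) (S : Finset E) :
    (f (insert e (insert a S)) - f ((insert a S).erase e))
      - (f (insert e (S.erase a)) - f ((S.erase a).erase e)) ≤ 0 := by
  set T := S.erase a with hT
  have haT : a ∉ T := Finset.notMem_erase a S
  have h1 : insert a S = insert a T := (insert_erase_self' a S).symm
  rw [h1]
  by_cases he : e ∈ T
  · have h2 : insert e (insert a T) = insert a T :=
      Finset.insert_eq_self.2 (Finset.mem_insert_of_mem he)
    have h3 : insert e T = T := Finset.insert_eq_self.2 he
    have h4 : (insert a T).erase e = insert a (T.erase e) :=
      Finset.erase_insert_of_ne hae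
    rw [h2, h3, h4]
    have := hsub (T.erase e) T (Finset.erase_subset e T) a haT
    linarith
  · have h4 : (insert a T).erase e = insert a T := by
      refine Finset.erase_eq_of_notMem ?_
      simp only [Finset.mem_insert]
      rintro (rfl | h)
      · exact hae rfl
      · exact he h
    have h5 : T.erase e = T := Finset.erase_eq_of_notMem he
    rw [h4, h5]
    have := hsub T (insert a T) (Finset.subset_insert a T) e (by
      simp only [Finset.mem_insert]
      rintro (rfl | h)
      · exact hae rfl
      · exact he h)
    linarith

lemma grad_second_diff {f : Finset E → ℝ} (hsub : SubmodularFn f) {x : E → ℝ}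
    {a e : E} (h : a ≠ e) (hx0 : ∀ e', 0 ≤ x e') (hx1 : ∀ e', x e' ≤ 1) :
    mleGrad f (Function.update x a 1) e ≤ mleGrad f (Function.update x a 0) e := by
  set g : Finset E → ℝ := fun S => f (insert e S) - f (S.erase e) with hg
  have h1 : mleGrad f (Function.update x a 1) e
      = mle g (Function.update (Function.update x e 0) a 1) := by
    rw [mleGrad_eq, Function.update_comm h]
  have h0 : mleGrad f (Function.update x a 0) e
      = mle g (Function.update (Function.update x e 0) a 0) := by
    rw [mleGrad_eq, Function.update_comm h]
  rw [h1, h0]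
  have key : mleGrad g (Function.update x e 0) a ≤ 0 := by
    rw [mleGrad_eq]
    refine mle_nonpos (fun S => ?_) ?_ ?_
    · exact double_diff_nonpos hsub h S
    · exact upd_nonneg (upd_nonneg hx0 e) a
    · exact upd_le_one (upd_le_one hx1 e) a
  unfold mleGrad at key
  linarith

lemma grad_le_update_zero {f : Finset E → ℝ} (hsub : SubmodularFn f) {x : E → ℝ}
    (hx0 : ∀ e', 0 ≤ x e') (hx1 : ∀ e', x e' ≤ 1) (a e : E) :
    mleGrad f x e ≤ mleGrad f (Function.update x a 0) e := by
  rcases eq_or_ne a e with rfl | h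
  · exact le_of_eq (mleGrad_update_self f x a 0).symm
  · have haff := mleGrad_update_affine f x h (x a)
    rw [Function.update_eq_self] at haff
    have hD := grad_second_diff hsub h hx0 hx1
    nlinarith [mul_nonneg (hx0 a) (sub_nonneg.2 hD)]

lemma grad_le_zeroOut {f : Finset E → ℝ} (hsub : SubmodularFn f) {x : E → ℝ}
    (hx0 : ∀ e', 0 ≤ x e') (hx1 : ∀ e', x e' ≤ 1) (e : E) (U : Finset E) :
    mleGrad f x e ≤ mleGrad f (fun e' => if e' ∈ U then 0 else x e') e := by
  classical
  induction U using Finset.induction_on with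
  | empty => simp
  | @insert a U haU ih =>
    have hfun : (fun e' => if e' ∈ insert a U then (0:ℝ) else x e')
        = Function.update (fun e' => if e' ∈ U then (0:ℝ) else x e') a 0 := by
      funext e'
      rcases eq_or_ne e' a with rfl | h
      · simp
      · rw [Function.update_of_ne h]
        simp [Finset.mem_insert, h]
    rw [hfun]
    refine le_trans ih (grad_le_update_zero hsub ?_ ?_ a e)
    · intro e'; by_cases h : e' ∈ U <;> simp [h, hx0 e']
    · intro e'; by_cases h : e' ∈ U <;> simp [h, hx1 e']

lemma main_aux {f : Finset E → ℝ} (hsub : SubmodularFn f) {x : E → ℝ}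
    (hx0 : ∀ e', 0 ≤ x e') (hx1 : ∀ e', x e' ≤ 1) (T : Finset E) :
    mle f (fun _ => 0) + ∑ e ∈ T, mleGrad f x e * x e
      ≤ mle f (fun e' => if e' ∈ T then x e' else 0) := by
  classical
  induction T using Finset.induction_on with
  | empty =>
    have : (fun e' => if e' ∈ (∅ : Finset E) then x e' else 0) = (fun _ => (0:ℝ)) := by
      funext e'; simp
    rw [this]
    simp
  | @insert a T haT ih =>
    set z : E → ℝ := fun e' => if e' ∈ T then x e' else 0 with hz
    have hz0 : ∀ e', 0 ≤ z e' := by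
      intro e'; by_cases h : e' ∈ T <;> simp [hz, h, hx0 e']
    have hz1 : ∀ e', z e' ≤ 1 := by
      intro e'; by_cases h : e' ∈ T <;> simp [hz, h, hx1 e']
    have hza : z a = 0 := by simp [hz, haT]
    have hins : (fun e' => if e' ∈ insert a T then x e' else 0)
        = Function.update z a (x a) := by
      funext e'
      rcases eq_or_ne e' a with rfl | h
      · simp
      · rw [Function.update_of_ne h]
        simp [hz, Finset.mem_insert, h]
    have h00 : Function.update z a 0 = z := by
      funext e'
      rcases eq_or_ne e' a with rfl | h
      · simp [hza]
      · rw [Function.update_of_ne h]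
    have haff := mle_update f z a (x a)
    rw [h00] at haff
    have hgz : mleGrad f z a = mle f (Function.update z a 1) - mle f z := by
      rw [mleGrad, h00]
    have hgrad : mleGrad f x a ≤ mleGrad f z a := by
      have hzc : z = fun e' => if e' ∈ Tᶜ then 0 else x e' := by
        funext e'
        by_cases h : e' ∈ T <;> simp [hz, h]
      rw [hzc]
      exact grad_le_zeroOut hsub hx0 hx1 a Tᶜ
    have heq : mle f (Function.update z a (x a)) = mle f z + x a * mleGrad f z a := by
      rw [haff, hgz]; ring
    have h1 : mleGrad f x a * x a ≤ x a * mleGrad f z a := by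
      rw [mul_comm]
      exact mul_le_mul_of_nonneg_left hgrad (hx0 a)
    rw [hins, Finset.sum_insert haT, heq]
    linarith

end Aux

/-- for the multilinear extension of a nonnegative submodular function,
`F(x) ≥ F(0) + Σ_e ∇_e F(x)·x_e`; in particular `F(x) ≥ Σ_e ∇_e F(x)·x_e`. -/
theorem mle_ge_inner_grad {E : Type*} [Fintype E] [DecidableEq E]
    (f : Finset E → ℝ) (hsub : SubmodularFn f) (hnn : ∀ S, 0 ≤ f S)
    (x : E → ℝ) (hx0 : ∀ e, 0 ≤ x e) (hx1 : ∀ e, x e ≤ 1) :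
    mle f x ≥ mle f (fun _ => 0) + ∑ e, mleGrad f x e * x e
    ∧ mle f x ≥ ∑ e, mleGrad f x e * x e := by
  have hmain := main_aux hsub hx0 hx1 Finset.univ
  have hxx : (fun e' => if e' ∈ (Finset.univ : Finset E) then x e' else 0) = x := by
    funext e'; simp
  rw [hxx] at hmain
  have h0 : 0 ≤ mle f (fun _ => 0) :=
    mle_nonneg hnn (fun _ => le_refl 0) (fun _ => by norm_num)
  constructor
  · exact hmain
  · linarith
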